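/- arXiv:2403.12224 — 3 statements merged into one kernel-verified Lean document; each statement's English description precedes it below -/
import Mathlib

section
/- Pedersen's commutator inequality: if A, B are elements of a C*-algebra with 0 ≤ A ≤ 1, then ‖[A^{1/2}, B]‖ ≤ (5/4)·‖[A, B]‖^{1/2}·‖B‖^{1/2} (in the normalized form with ‖B‖ ≤ 1: ‖[A^{1/2}, B]‖ ≤ (5/4)‖[A,B]‖^{1/2}). -/
open Finset

namespace PedersenAux

/-- The coefficient `α n = a_{n+1}` in `1 - √(1-x) = ∑ a_n x^n`. -/
noncomputable def al (n : ℕ) : ℝ := catalan n / 2 ^ (2*n+1)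

lemma catalan_pos' (n : ℕ) : 0 < catalan n := by
  rcases Nat.eq_zero_or_pos (catalan n) with h | h
  · have := succ_mul_catalan_eq_centralBinom n
    rw [h, Nat.mul_zero] at this
    exact absurd this.symm (Nat.centralBinom_pos n).ne'
  · exact h

lemma al_pos (n : ℕ) : 0 < al n := by
  have h : (0:ℝ) < catalan n := by exact_mod_cast catalan_pos' n
  unfold al
  positivity

lemma al_zero : al 0 = 1/2 := by norm_num [al]

lemma centralBinom_succ_real (n : ℕ) :
    ((n:ℝ) + 1) * (n+1).centralBinom = 2 * (2*n+1) * n.centralBinom := by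
  exact_mod_cast congrArg (Nat.cast (R := ℝ)) (Nat.succ_mul_centralBinom_succ n)

lemma catalan_centralBinom_real (n : ℕ) :
    ((n:ℝ) + 1) * catalan n = n.centralBinom := by
  exact_mod_cast congrArg (Nat.cast (R := ℝ)) (succ_mul_catalan_eq_centralBinom n)

lemma centralBinom_succ_catalan (n : ℕ) :
    ((n+1 : ℕ).centralBinom : ℝ) = 2 * (2*n+1) * catalan n := by
  have h1 := centralBinom_succ_real n
  have h2 := catalan_centralBinom_real n
  have hn : ((n:ℝ) + 1) ≠ 0 := by positivity
  field_simp at h1 h2 ⊢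
  nlinarith [h1, h2]

lemma catalan_ratio (n : ℕ) :
    ((n:ℝ) + 2) * catalan (n+1) = 2 * (2*n+1) * catalan n := by
  have h1 := centralBinom_succ_catalan n
  have h2 := catalan_centralBinom_real (n+1)
  push_cast at h2 ⊢
  nlinarith [h1, h2]

/-- Convolution identity, from the Catalan recurrence. -/
lemma al_conv (p : ℕ) : ∑ k ∈ range (p+1), al k * al (p - k) = 2 * al (p+1) := by
  have hcat : (catalan (p+1) : ℝ) = ∑ k ∈ range (p+1), (catalan k : ℝ) * catalan (p - k) := by
    rw [catalan_succ p]
    push_cast [Fin.sum_univ_eq_sum_range (fun i => (catalan i : ℝ) * catalan (p - i)) (p+1)]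
    rfl
  have hterm : ∀ k ∈ range (p+1),
      al k * al (p - k) = (catalan k : ℝ) * catalan (p - k) / 2 ^ (2*p+2) := by
    intro k hk
    have hkp : k ≤ p := Nat.lt_succ_iff.mp (mem_range.mp hk)
    have hexp : (2*k+1) + (2*(p-k)+1) = 2*p+2 := by omega
    unfold al
    rw [div_mul_div_comm, ← pow_add, hexp]
  rw [sum_congr rfl hterm, ← sum_div, ← hcat]
  unfold al
  have : (2:ℝ) ^ (2*(p+1)+1) = 2 ^ (2*p+2) * 2 := by ring_nf
  rw [this]
  field_simp

/-- `c n = centralBinom n / 4^n`. -/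
noncomputable def cb (n : ℕ) : ℝ := n.centralBinom / 4 ^ n

lemma cb_pos (n : ℕ) : 0 < cb n := by
  have h : (0:ℝ) < n.centralBinom := by exact_mod_cast Nat.centralBinom_pos n
  unfold cb; positivity

lemma cb_zero : cb 0 = 1 := by norm_num [cb, Nat.centralBinom]

lemma cb_succ (n : ℕ) : (2*(n:ℝ)+2) * cb (n+1) = (2*n+1) * cb n := by
  have h1 := centralBinom_succ_real n
  unfold cb
  have h4 : (4:ℝ) ^ (n+1) = 4 * 4 ^ n := by ring
  rw [h4]
  have hpow : (0:ℝ) < 4 ^ n := by positivity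
  field_simp
  nlinarith [h1]

lemma al_eq_cb (n : ℕ) : (2*(n:ℝ)+1) * al n = cb (n+1) := by
  have h := centralBinom_succ_catalan n
  unfold al cb
  rw [h]
  have : (4:ℝ) ^ (n+1) = 2 ^ (2*n+1) * 2 := by
    rw [show (4:ℝ) = 2^2 by norm_num, ← pow_mul]
    ring_nf
  rw [this]
  have hpow : (0:ℝ) < 2 ^ (2*n+1) := by positivity
  field_simp

lemma cb_sq (n : ℕ) : cb n ^ 2 * (7*n+2) ≤ 9/4 := by
  induction n with
  | zero => norm_num [cb_zero]
  | succ n ih =>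
    have hs := cb_succ n
    have hpos := cb_pos n
    have hpos' := cb_pos (n+1)
    rcases Nat.eq_zero_or_pos n with rfl | hn
    · have h1 : cb 1 = 1/2 := by
        have := cb_succ 0
        rw [cb_zero] at this
        push_cast at this
        linarith
      norm_num [h1]
    · have hn1 : (1:ℝ) ≤ n := by exact_mod_cast hn
      have key0 : ((2*(n:ℝ)+2) * cb (n+1))^2 = ((2*(n:ℝ)+1) * cb n)^2 := by rw [hs]
      have key : cb (n+1) ^ 2 * (2*(n:ℝ)+2)^2 = cb n ^ 2 * (2*n+1)^2 := by
        linear_combination key0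
      have hineq : cb n ^ 2 * ((2*(n:ℝ)+1)^2 * (7*(n:ℝ)+9))
          ≤ cb n ^ 2 * ((7*n+2) * (2*n+2)^2) := by
        apply mul_le_mul_of_nonneg_left _ (sq_nonneg _)
        nlinarith [hn1]
      have hineq2 : (cb n ^ 2 * (7*(n:ℝ)+2)) * (2*n+2)^2 ≤ (9/4) * (2*n+2)^2 := by
        apply mul_le_mul_of_nonneg_right ih (by positivity)
      rw [show ((7:ℝ)*((n:ℕ)+1:ℕ)+2) = 7*(n:ℝ)+9 by push_cast; ring]
      nlinarith [key, hineq, hineq2, sq_nonneg (2*(n:ℝ)+2)]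

lemma al_ratio (n : ℕ) : 2*((n:ℝ)+2) * al (n+1) = (2*n+1) * al n := by
  have h := catalan_ratio n
  unfold al
  have hp : (2:ℝ) ^ (2*(n+1)+1) = 2 ^ (2*n+1) * 4 := by
    rw [show 2*(n+1)+1 = (2*n+1)+2 by ring, pow_add]
    norm_num
  rw [hp]
  have hpow : (0:ℝ) ≠ 2 ^ (2*n+1) := by positivity
  rw [div_eq_mul_inv, div_eq_mul_inv, mul_inv]
  linear_combination (1/2:ℝ) * (2^(2*n+1))⁻¹ * h

lemma sum_al (N : ℕ) : ∑ k ∈ range N, al k = 1 - 2*((N:ℝ)+1)*al N := by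
  induction N with
  | zero => norm_num [al_zero]
  | succ N ih =>
    rw [sum_range_succ, ih]
    have h := al_ratio N
    push_cast
    linarith

lemma S_eq (N : ℕ) : ∑ k ∈ range N, ((k:ℝ)+1) * al k = N * cb N := by
  induction N with
  | zero => simp
  | succ N ih =>
    rw [sum_range_succ, ih]
    have h1 := al_eq_cb N
    have h2 := cb_succ N
    have hne : (2*(N:ℝ)+1) ≠ 0 := by positivity
    have G2 : (2*(N:ℝ)+1) * ((N:ℝ) * cb N + ((N:ℝ)+1) * al N)
        = (2*(N:ℝ)+1) * ((((N:ℕ)+1:ℕ):ℝ) * cb (N+1)) := by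
      push_cast
      linear_combination ((N:ℝ)+1) * h1 - (N:ℝ) * h2
    have := mul_left_cancel₀ hne G2
    push_cast at this ⊢
    linarith

noncomputable def sN (N : ℕ) (x : ℝ) : ℝ := ∑ k ∈ range N, al k * x ^ (k+1)

lemma sN_one (N : ℕ) : sN N 1 = 1 - 2*((N:ℝ)+1)*al N := by
  unfold sN
  simp only [one_pow, mul_one]
  exact sum_al N

lemma sN_mono (N : ℕ) {x : ℝ} (hx0 : 0 ≤ x) (hx1 : x ≤ 1) : sN N x ≤ sN N 1 := by
  unfold sN
  apply sum_le_sum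
  intro k _
  have h1 : x ^ (k+1) ≤ 1 ^ (k+1) := pow_le_pow_left₀ hx0 hx1 (k+1)
  exact mul_le_mul_of_nonneg_left h1 (al_pos k).le

lemma sN_nonneg (N : ℕ) {x : ℝ} (hx0 : 0 ≤ x) : 0 ≤ sN N x := by
  unfold sN
  apply sum_nonneg
  intro k hk
  have := al_pos k
  positivity

/-- the "low" part of the square. -/
lemma low_id (N : ℕ) (hN : 1 ≤ N) (x : ℝ) :
    ∑ i ∈ range N, ∑ j ∈ range (N - 1 - i), al i * al j * x ^ (i+j+2)
      = 2 * sN N x - x := by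
  induction N with
  | zero => omega
  | succ N ih =>
    rcases Nat.eq_zero_or_pos N with rfl | hN'
    · simp only [show (0:ℕ)+1 = 1 from rfl, range_one, sum_singleton,
        show (1:ℕ)-1-0 = 0 from rfl, range_zero, sum_empty, sN]
      rw [al_zero]
      ring
    · have step1 : ∑ i ∈ range (N+1), ∑ j ∈ range (N+1-1-i), al i * al j * x ^ (i+j+2)
          = ∑ i ∈ range N, ∑ j ∈ range (N-1-i), al i * al j * x ^ (i+j+2)
            + ∑ i ∈ range N, al i * al (N-1-i) * x ^ (N+1) := by
        rw [sum_range_succ]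
        have hz : (N+1-1-N) = 0 := by omega
        rw [hz]
        simp only [range_zero, sum_empty, add_zero]
        rw [← sum_add_distrib]
        apply sum_congr rfl
        intro i hi
        have hiN : i < N := mem_range.mp hi
        have hsplit : N+1-1-i = (N-1-i) + 1 := by omega
        rw [hsplit, sum_range_succ]
        have hexp : i + (N-1-i) + 2 = N+1 := by omega
        rw [hexp]
      have hconv : ∑ i ∈ range N, al i * al (N-1-i) = 2 * al N := by
        have := al_conv (N-1)
        have hNN : N - 1 + 1 = N := by omega
        rw [hNN] at this
        exact this
      rw [step1, ih hN']
      have hsucc : sN (N+1) x = sN N x + al N * x ^ (N+1) := by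
        unfold sN; rw [sum_range_succ]
      have hmul : ∑ i ∈ range N, al i * al (N-1-i) * x ^ (N+1)
          = (∑ i ∈ range N, al i * al (N-1-i)) * x ^ (N+1) := by
        rw [sum_mul]
      rw [hsucc, hmul, hconv]
      ring

lemma sq_id (N : ℕ) (hN : 1 ≤ N) (x : ℝ) :
    (sN N x)^2 + x - 2 * sN N x
      = ∑ i ∈ range N, ∑ j ∈ Ico (N - 1 - i) N, al i * al j * x ^ (i+j+2) := by
  have hs2 : (sN N x)^2 = ∑ i ∈ range N, ∑ j ∈ range N, al i * al j * x ^ (i+j+2) := by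
    unfold sN
    rw [sq, sum_mul_sum]
    apply sum_congr rfl
    intro i _
    apply sum_congr rfl
    intro j _
    rw [show i+j+2 = (i+1)+(j+1) by ring, pow_add]
    ring
  have hsplit : ∀ i ∈ range N,
      ∑ j ∈ range N, al i * al j * x ^ (i+j+2)
        = ∑ j ∈ range (N-1-i), al i * al j * x ^ (i+j+2)
          + ∑ j ∈ Ico (N-1-i) N, al i * al j * x ^ (i+j+2) := by
    intro i _
    simp only [range_eq_Ico]
    exact (sum_Ico_consecutive _ (Nat.zero_le (N-1-i)) (by omega : N-1-i ≤ N)).symm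
  rw [hs2, sum_congr rfl hsplit, sum_add_distrib, low_id N hN x]
  ring

noncomputable def TT (N : ℕ) : ℝ := 2*((N:ℝ)+1) * al N

lemma TT_pos (N : ℕ) : 0 < TT N := by
  have := al_pos N
  unfold TT
  positivity

lemma le_of_sq {a b : ℝ} (ha : 0 ≤ a) (hb : 0 ≤ b) (h : a^2 ≤ b^2) : a ≤ b := by
  nlinarith

/-- Key pointwise bounds for the partial sums of the binomial series of `√(1-x)`. -/
lemma key_bounds (N : ℕ) {t : ℝ} (ht0 : 0 ≤ t) (ht1 : t ≤ 1) :
    1 - sN N (1-t) - TT N ≤ Real.sqrt t ∧ Real.sqrt t ≤ 1 - sN N (1-t) := by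
  rcases Nat.eq_zero_or_pos N with rfl | hN
  · have h0 : sN 0 (1-t) = 0 := by simp [sN]
    have hT : TT 0 = 1 := by rw [TT, al_zero]; norm_num
    rw [h0, hT]
    constructor
    · simpa using Real.sqrt_nonneg t
    · simpa using Real.sqrt_le_one.mpr ht1
  · set x : ℝ := 1 - t with hx
    have hx0 : 0 ≤ x := by simp [hx]; linarith
    have hx1 : x ≤ 1 := by simp [hx]; linarith
    have ht' : t = 1 - x := by simp [hx]
    set q : ℝ := 1 - sN N x with hq
    -- e = q^2 - (1-x) = sN^2 + x - 2*sN ≥ 0 and ≤ TT^2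
    have he_eq : q^2 - (1-x) = (sN N x)^2 + x - 2 * sN N x := by rw [hq]; ring
    have he_repr := sq_id N hN x
    have he_nonneg : 0 ≤ (sN N x)^2 + x - 2 * sN N x := by
      rw [he_repr]
      apply sum_nonneg
      intro i _
      apply sum_nonneg
      intro j _
      have := al_pos i
      have := al_pos j
      positivity
    have hqT : TT N ≤ q := by
      have hmono := sN_mono N hx0 hx1
      have hs1 := sN_one N
      rw [hq]
      unfold TT at *
      linarith
    have hq0 : 0 ≤ q := le_trans (TT_pos N).le hqT
    have he_le : (sN N x)^2 + x - 2 * sN N x ≤ TT N ^ 2 := by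
      have h1 : (sN N x)^2 + x - 2 * sN N x ≤ (sN N 1)^2 + 1 - 2 * sN N 1 := by
        rw [he_repr, sq_id N hN 1]
        apply sum_le_sum
        intro i _
        apply sum_le_sum
        intro j _
        have hp : x ^ (i+j+2) ≤ 1 := by
          calc x ^ (i+j+2) ≤ 1 ^ (i+j+2) := pow_le_pow_left₀ hx0 hx1 _
            _ = 1 := one_pow _
        simp only [one_pow]
        nlinarith [hp, mul_pos (al_pos i) (al_pos j)]
      have h2 : (sN N 1)^2 + 1 - 2 * sN N 1 = TT N ^ 2 := by
        rw [sN_one]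
        unfold TT
        ring
      linarith [h1, h2]
    constructor
    · -- lower bound : q - TT ≤ √t
      rcases le_or_gt (q - TT N) 0 with h | h
      · rw [ht']
        have h0 := Real.sqrt_nonneg (1-x)
        linarith
      · have hsq : (q - TT N)^2 ≤ t := by
          have hT := TT_pos N
          nlinarith [he_nonneg, he_le, hqT, he_eq]
        have : q - TT N = Real.sqrt ((q - TT N)^2) := (Real.sqrt_sq h.le).symm
        rw [ht']
        calc 1 - sN N x - TT N = Real.sqrt ((q - TT N)^2) := by rw [← this]
          _ ≤ Real.sqrt (1 - x) := Real.sqrt_le_sqrt (by rw [← ht']; exact hsq)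
    · -- upper bound : √t ≤ q
      have h1 : t ≤ q^2 := by
        rw [ht']
        nlinarith [he_nonneg, he_eq]
      calc Real.sqrt t ≤ Real.sqrt (q^2) := Real.sqrt_le_sqrt h1
        _ = q := Real.sqrt_sq hq0

lemma cb_sqrt_le (n : ℕ) : cb n * Real.sqrt (7*n+2) ≤ 3/2 := by
  have h := cb_sq n
  have hpos := cb_pos n
  have hr : Real.sqrt (7*(n:ℝ)+2) ^ 2 = 7*(n:ℝ)+2 := Real.sq_sqrt (by positivity)
  apply le_of_sq (by positivity) (by norm_num)
  calc (cb n * Real.sqrt (7*(n:ℝ)+2))^2 = cb n ^2 * (7*(n:ℝ)+2) := by rw [mul_pow, hr]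
    _ ≤ 9/4 := h
    _ = (3/2)^2 := by norm_num

lemma TT_eq (N : ℕ) : TT N * (2*(N:ℝ)+1) = 2*((N:ℝ)+1) * cb (N+1) := by
  have h := al_eq_cb N
  unfold TT
  linear_combination 2*((N:ℝ)+1) * h

lemma TT_decay (N : ℕ) : TT N * Real.sqrt ((N:ℝ)+1) ≤ 3/2 := by
  have ha' : Real.sqrt ((N:ℝ)+1) ^ 2 = (N:ℝ)+1 := Real.sq_sqrt (by positivity)
  have ha'0 : 0 ≤ Real.sqrt ((N:ℝ)+1) := Real.sqrt_nonneg _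
  have h1 : cb (N+1) * Real.sqrt (7*((N:ℕ)+1:ℕ)+2) ≤ 3/2 := cb_sqrt_le (N+1)
  have hcast : ((((N:ℕ)+1:ℕ)):ℝ) = (N:ℝ)+1 := by push_cast; ring
  rw [hcast] at h1
  have h2 : 2 * Real.sqrt ((N:ℝ)+1) ≤ Real.sqrt (7*((N:ℝ)+1)+2) := by
    apply le_of_sq (by positivity) (Real.sqrt_nonneg _)
    rw [mul_pow, ha', Real.sq_sqrt (by positivity)]
    nlinarith [Nat.cast_nonneg (α := ℝ) N]
  have hcb := cb_pos (N+1)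
  have h3 : cb (N+1) * (2 * Real.sqrt ((N:ℝ)+1)) ≤ 3/2 := by
    calc cb (N+1) * (2 * Real.sqrt ((N:ℝ)+1)) ≤ cb (N+1) * Real.sqrt (7*((N:ℝ)+1)+2) :=
          mul_le_mul_of_nonneg_left h2 hcb.le
      _ ≤ 3/2 := h1
  -- TT N * √(N+1) * (2N+1) = (N+1) * (cb (N+1) * 2 √(N+1)) ≤ (3/2)(N+1) ≤ (3/4)(2N+1)... 
  have hTT := TT_eq N
  have hNpos : (0:ℝ) < 2*(N:ℝ)+1 := by positivity
  apply le_of_mul_le_mul_right _ hNpos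
  have key : TT N * Real.sqrt ((N:ℝ)+1) * (2*(N:ℝ)+1)
      = ((N:ℝ)+1) * (cb (N+1) * (2 * Real.sqrt ((N:ℝ)+1))) := by
    linear_combination Real.sqrt ((N:ℝ)+1) * hTT
  rw [key]
  have hN1 : (0:ℝ) ≤ (N:ℝ)+1 := by positivity
  calc ((N:ℝ)+1) * (cb (N+1) * (2 * Real.sqrt ((N:ℝ)+1))) ≤ ((N:ℝ)+1) * (3/2) :=
        mul_le_mul_of_nonneg_left h3 hN1
    _ ≤ 3/2 * (2*(N:ℝ)+1) := by nlinarith [Nat.cast_nonneg (α := ℝ) N]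

lemma sqrt7_facts : Real.sqrt 7 ^ 2 = 7 ∧ (132/50 : ℝ) ≤ Real.sqrt 7 := by
  have h2 : Real.sqrt 7 ^ 2 = 7 := Real.sq_sqrt (by norm_num)
  refine ⟨h2, ?_⟩
  apply le_of_sq (by norm_num) (Real.sqrt_nonneg _)
  rw [h2]
  norm_num

lemma claimA (d : ℝ) (N : ℕ) (hd0 : 0 < d) (hdN : (N:ℝ) * d ≤ 1) :
    (N:ℝ) * cb N * d * Real.sqrt 7 ≤ 3/2 * Real.sqrt d := by
  set s7 := Real.sqrt 7 with hs7
  set b := Real.sqrt d with hb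
  set a := Real.sqrt N with ha
  set r := Real.sqrt (7*(N:ℝ)+2) with hr
  have hs7sq : s7^2 = 7 := Real.sq_sqrt (by norm_num)
  have hbsq : b^2 = d := Real.sq_sqrt hd0.le
  have hasq : a^2 = (N:ℝ) := Real.sq_sqrt (Nat.cast_nonneg N)
  have hrsq : r^2 = 7*(N:ℝ)+2 := Real.sq_sqrt (by positivity)
  have hs70 : 0 ≤ s7 := Real.sqrt_nonneg _
  have hb0 : 0 ≤ b := Real.sqrt_nonneg _
  have ha0 : 0 ≤ a := Real.sqrt_nonneg _
  have hr0 : (0:ℝ) < r := Real.sqrt_pos.mpr (by positivity)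
  have hN0 : (0:ℝ) ≤ (N:ℝ) := Nat.cast_nonneg N
  have h1 : cb N * r ≤ 3/2 := cb_sqrt_le N
  have h2 : s7 * a ≤ r := by
    apply le_of_sq (by positivity) hr0.le
    rw [mul_pow, hs7sq, hasq, hrsq]
    linarith
  have h3 : (N:ℝ) * d ≤ a * b := by
    apply le_of_sq (by positivity) (by positivity)
    rw [mul_pow, mul_pow, hasq, hbsq]
    nlinarith [mul_nonneg hN0 hd0.le, hdN]
  have hcb := cb_pos N
  apply le_of_mul_le_mul_right _ hr0
  have hstep : ((N:ℝ) * d * s7) * (cb N * r) ≤ ((N:ℝ) * d * s7) * (3/2) :=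
    mul_le_mul_of_nonneg_left h1 (by positivity)
  have hstep2 : (N:ℝ) * d * s7 ≤ b * r := by
    have e1 : (N:ℝ) * d * s7 ≤ (a * b) * s7 := mul_le_mul_of_nonneg_right h3 hs70
    have e2 : b * (s7 * a) ≤ b * r := mul_le_mul_of_nonneg_left h2 hb0
    nlinarith [e1, e2]
  calc (N:ℝ) * cb N * d * s7 * r = ((N:ℝ) * d * s7) * (cb N * r) := by ring
    _ ≤ ((N:ℝ) * d * s7) * (3/2) := hstep
    _ ≤ (b * r) * (3/2) := mul_le_mul_of_nonneg_right hstep2 (by norm_num)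
    _ = 3/2 * b * r := by ring

lemma claimB (d : ℝ) (N : ℕ) (hd0 : 0 < d) (hd1 : d ≤ 1/3) (hdN1 : 1 ≤ ((N:ℝ)+1) * d) :
    TT N * Real.sqrt 7 ≤ 9/5 * Real.sqrt d := by
  set s7 := Real.sqrt 7 with hs7
  set b := Real.sqrt d with hb
  set a := Real.sqrt ((N:ℝ)+1) with ha
  set r := Real.sqrt (7*(N:ℝ)+9) with hr
  have hs7sq : s7^2 = 7 := Real.sq_sqrt (by norm_num)
  have hbsq : b^2 = d := Real.sq_sqrt hd0.le
  have hasq : a^2 = (N:ℝ)+1 := Real.sq_sqrt (by positivity)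
  have hrsq : r^2 = 7*(N:ℝ)+9 := Real.sq_sqrt (by positivity)
  have hs70 : 0 ≤ s7 := Real.sqrt_nonneg _
  have hb0 : 0 ≤ b := Real.sqrt_nonneg _
  have ha0 : 0 ≤ a := Real.sqrt_nonneg _
  have hr0 : (0:ℝ) < r := Real.sqrt_pos.mpr (by positivity)
  have hN0 : (0:ℝ) ≤ (N:ℝ) := Nat.cast_nonneg N
  have h1 : cb (N+1) * r ≤ 3/2 := by
    have := cb_sqrt_le (N+1)
    have hcast : (7:ℝ)*(((N:ℕ)+1:ℕ):ℝ)+2 = 7*(N:ℝ)+9 := by push_cast; ring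
    rwa [hcast] at this
  have h2 : s7 * a ≤ r := by
    apply le_of_sq (by positivity) hr0.le
    rw [mul_pow, hs7sq, hasq, hrsq]
    linarith
  have h3 : a * (2 - d) ≤ b * (2*(N:ℝ)+1) := by
    apply le_of_sq (mul_nonneg ha0 (by linarith)) (by positivity)
    rw [mul_pow, mul_pow, hasq, hbsq]
    nlinarith [mul_nonneg (sub_nonneg.mpr hdN1) (show (0:ℝ) ≤ 4*((N:ℝ)+1) - d by nlinarith)]
  have h4 : a ≤ (3/5) * (b * (2*(N:ℝ)+1)) := by nlinarith [h3]
  have hcb := cb_pos (N+1)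
  have hTTeq := TT_eq N
  have hT0 := TT_pos N
  have h2N1 : (0:ℝ) < 2*(N:ℝ)+1 := by positivity
  apply le_of_mul_le_mul_right _ h2N1
  apply le_of_mul_le_mul_right _ hr0
  have key : TT N * s7 * (2*(N:ℝ)+1) * r = (2*((N:ℝ)+1) * cb (N+1)) * s7 * r := by
    linear_combination s7 * r * hTTeq
  rw [key]
  have step1 : (2*((N:ℝ)+1) * cb (N+1)) * s7 * r = (2*((N:ℝ)+1) * s7) * (cb (N+1) * r) := by
    ring
  have step2 : (2*((N:ℝ)+1) * s7) * (cb (N+1) * r) ≤ (2*((N:ℝ)+1) * s7) * (3/2) :=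
    mul_le_mul_of_nonneg_left h1 (by positivity)
  have step3 : (2*((N:ℝ)+1) * s7) * (3/2) = 3 * a * (s7 * a) := by
    rw [← hasq]; ring
  have step4 : 3 * a * (s7 * a) ≤ 3 * a * r := by
    apply mul_le_mul_of_nonneg_left h2 (by positivity)
  have step5 : 3 * a ≤ (9/5) * (b * (2*(N:ℝ)+1)) := by nlinarith [h4]
  have step6 : 3 * a * r ≤ (9/5) * (b * (2*(N:ℝ)+1)) * r :=
    mul_le_mul_of_nonneg_right step5 hr0.le
  calc (2*((N:ℝ)+1) * cb (N+1)) * s7 * r ≤ (2*((N:ℝ)+1) * s7) * (3/2) := by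
        rw [step1]; exact step2
    _ = 3 * a * (s7 * a) := step3
    _ ≤ 3 * a * r := step4
    _ ≤ (9/5) * (b * (2*(N:ℝ)+1)) * r := step6
    _ = 9/5 * b * (2*(N:ℝ)+1) * r := by ring

lemma region3 (d : ℝ) (N : ℕ) (hd0 : 0 < d) (hd1 : d ≤ 1/3)
    (hdN : (N:ℝ) * d ≤ 1) (hdN1 : 1 ≤ ((N:ℝ)+1) * d) :
    (N:ℝ) * cb N * d + TT N ≤ 5/4 * Real.sqrt d := by
  have hA := claimA d N hd0 hdN
  have hB := claimB d N hd0 hd1 hdN1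
  obtain ⟨hs7sq, hs7ge⟩ := sqrt7_facts
  have hb0 : 0 ≤ Real.sqrt d := Real.sqrt_nonneg _
  have hsum : ((N:ℝ) * cb N * d + TT N) * Real.sqrt 7 ≤ 33/10 * Real.sqrt d := by
    nlinarith [hA, hB]
  have hpos : 0 ≤ (N:ℝ) * cb N * d + TT N := by
    have := cb_pos N
    have := TT_pos N
    have : (0:ℝ) ≤ (N:ℝ) * cb N * d := by positivity
    nlinarith [TT_pos N]
  nlinarith [hsum, mul_le_mul_of_nonneg_left hs7ge hpos]

lemma region2 (d : ℝ) (h1 : 1/3 ≤ d) (h2 : d ≤ 16/25) :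
    2 * cb 2 * d + TT 2 ≤ 5/4 * Real.sqrt d := by
  have hcb2 : cb 2 = 3/8 := by
    have : Nat.centralBinom 2 = 6 := by decide
    rw [cb, this]
    norm_num
  have hTT2 : TT 2 = 3/8 := by
    rw [TT, al, catalan_two]
    norm_num
  rw [hcb2, hTT2]
  set b := Real.sqrt d with hb
  have hb0 : 0 ≤ b := Real.sqrt_nonneg _
  have hbsq : b^2 = d := Real.sq_sqrt (by linarith)
  have hy1 : 577/1000 ≤ b := by nlinarith [hbsq, hb0]
  have hy2 : b ≤ 4/5 := by nlinarith [hbsq, hb0]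
  nlinarith [mul_nonneg (sub_nonneg.mpr hy1) (sub_nonneg.mpr hy2)]

lemma region1 (d : ℝ) (h1 : 16/25 ≤ d) : (1:ℝ) ≤ 5/4 * Real.sqrt d := by
  have hb0 : 0 ≤ Real.sqrt d := Real.sqrt_nonneg _
  have hbsq : Real.sqrt d ^2 = d := Real.sq_sqrt (by linarith)
  nlinarith [hbsq, hb0]

section Operator

variable {𝔄 : Type*} [CStarAlgebra 𝔄] [PartialOrder 𝔄] [StarOrderedRing 𝔄]

lemma comm_shift (X B : 𝔄) (c : ℝ) (hB : ‖B‖ ≤ 1) :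
    ‖X*B - B*X‖ ≤ 2 * ‖X - c • (1:𝔄)‖ := by
  have h : X*B - B*X = (X - c • (1:𝔄))*B - B*(X - c • (1:𝔄)) := by
    rw [sub_mul, mul_sub, smul_mul_assoc, one_mul, mul_smul_comm, mul_one]
    abel
  rw [h]
  have h1 : ‖(X - c • (1:𝔄))*B‖ ≤ ‖X - c • (1:𝔄)‖ * ‖B‖ := norm_mul_le _ _
  have h2 : ‖B*(X - c • (1:𝔄))‖ ≤ ‖B‖ * ‖X - c • (1:𝔄)‖ := norm_mul_le _ _
  have h3 := norm_sub_le ((X - c • (1:𝔄))*B) (B*(X - c • (1:𝔄)))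
  have h4 : (0:ℝ) ≤ ‖X - c • (1:𝔄)‖ := norm_nonneg _
  nlinarith [h1, h2, h3, h4, norm_nonneg B]

lemma comm_pow (C B : 𝔄) (hC : ‖C‖ ≤ 1) (n : ℕ) :
    ‖C^n*B - B*C^n‖ ≤ n * ‖C*B - B*C‖ := by
  rcases subsingleton_or_nontrivial 𝔄 with htriv | hnt
  · have h0 : C^n*B - B*C^n = 0 := Subsingleton.elim _ _
    rw [h0, norm_zero]
    positivity
  induction n with
  | zero => simp
  | succ n ih =>
    have hCn : ‖C^n‖ ≤ 1 := by
      calc ‖C^n‖ ≤ ‖C‖^n := norm_pow_le C n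
        _ ≤ 1^n := pow_le_pow_left₀ (norm_nonneg C) hC n
        _ = 1 := one_pow n
    have hid : C^(n+1)*B - B*C^(n+1) = C^n*(C*B - B*C) + (C^n*B - B*C^n)*C := by
      rw [pow_succ]
      noncomm_ring
    rw [hid]
    have h1 : ‖C^n*(C*B - B*C)‖ ≤ 1 * ‖C*B - B*C‖ := by
      calc ‖C^n*(C*B - B*C)‖ ≤ ‖C^n‖ * ‖C*B - B*C‖ := norm_mul_le _ _
        _ ≤ 1 * ‖C*B - B*C‖ := mul_le_mul_of_nonneg_right hCn (norm_nonneg _)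
    have h2 : ‖(C^n*B - B*C^n)*C‖ ≤ ((n:ℝ) * ‖C*B - B*C‖) * 1 := by
      calc ‖(C^n*B - B*C^n)*C‖ ≤ ‖C^n*B - B*C^n‖ * ‖C‖ := norm_mul_le _ _
        _ ≤ ((n:ℝ) * ‖C*B - B*C‖) * 1 := by
            apply mul_le_mul ih hC (norm_nonneg _)
            positivity
    calc ‖C^n*(C*B - B*C) + (C^n*B - B*C^n)*C‖
        ≤ ‖C^n*(C*B - B*C)‖ + ‖(C^n*B - B*C^n)*C‖ := norm_add_le _ _
      _ ≤ 1 * ‖C*B - B*C‖ + ((n:ℝ) * ‖C*B - B*C‖) * 1 := add_le_add h1 h2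
      _ = ((n:ℕ)+1 : ℕ) * ‖C*B - B*C‖ := by push_cast; ring

lemma master (A B : 𝔄) (hA0 : 0 ≤ A) (hA1 : A ≤ 1) (hB : ‖B‖ ≤ 1) (N : ℕ) :
    ‖CFC.sqrt A * B - B * CFC.sqrt A‖ ≤ (N:ℝ) * cb N * ‖A*B - B*A‖ + TT N := by
  have hsa : IsSelfAdjoint A := .of_nonneg hA0
  have hspec0 : ∀ t ∈ spectrum ℝ A, (0:ℝ) ≤ t := fun t ht => spectrum_nonneg_of_nonneg hA0 ht
  have hspec1 : ∀ t ∈ spectrum ℝ A, t ≤ 1 := by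
    intro t ht
    have h := (le_algebraMap_iff_spectrum_le (r := (1:ℝ)) (a := A) hsa).mp
    exact h (by rw [map_one]; exact hA1) t ht
  have hcont_s : Continuous (fun t : ℝ => sN N (1 - t)) := by
    simp only [sN]
    apply continuous_finset_sum
    intro k _
    fun_prop
  have hcont_q : Continuous (fun t : ℝ => 1 - sN N (1 - t)) := continuous_const.sub hcont_s
  have hsqrt : CFC.sqrt A = cfc Real.sqrt A := by
    rw [CFC.sqrt_eq_real_sqrt A hA0, cfcₙ_eq_cfc]
  set C : 𝔄 := 1 - A with hCdef
  set Q : 𝔄 := ∑ k ∈ range N, al k • C^(k+1) with hQdef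
  have hQ : cfc (fun t : ℝ => sN N (1 - t)) A = Q := by
    have hfun : (fun t : ℝ => sN N (1-t))
        = (∑ k ∈ range N, fun t : ℝ => al k * (1-t)^(k+1)) := by
      funext t
      simp [sN, Finset.sum_apply]
    rw [hfun, cfc_sum _ A _ (fun i _ => by fun_prop)]
    refine Finset.sum_congr rfl fun k _ => ?_
    have h1 : cfc (fun t:ℝ => al k * (1-t)^(k+1)) A
        = al k • cfc (fun t:ℝ => (1-t)^(k+1)) A :=
      cfc_const_mul (al k) _ A (by fun_prop)
    rw [h1]
    congr 1
    have h2 : cfc (fun t:ℝ => (1-t)^(k+1)) A = (cfc (fun t:ℝ => 1-t) A)^(k+1) :=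
      cfc_pow _ _ A (by fun_prop)
    rw [h2]
    congr 1
    have h3 : cfc (fun t:ℝ => (1:ℝ)-t) A = cfc (fun _:ℝ => (1:ℝ)) A - cfc (fun t:ℝ => t) A :=
      cfc_sub _ _ A (by fun_prop) (by fun_prop)
    rw [h3, cfc_const _ _, cfc_id' ℝ A, map_one]
  have hP : cfc (fun t : ℝ => 1 - sN N (1 - t)) A = 1 - Q := by
    have h3 : cfc (fun t:ℝ => 1 - sN N (1-t)) A
        = cfc (fun _:ℝ => (1:ℝ)) A - cfc (fun t:ℝ => sN N (1-t)) A :=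
      cfc_sub _ _ A (by fun_prop) hcont_s.continuousOn
    rw [h3, cfc_const _ _, map_one, hQ]
  set g : ℝ → ℝ := fun t => Real.sqrt t - (1 - sN N (1-t)) with hg
  have hcont_g : ContinuousOn g (spectrum ℝ A) :=
    (Real.continuous_sqrt.sub hcont_q).continuousOn
  have hR : CFC.sqrt A - (1 - Q) = cfc g A := by
    rw [hsqrt, ← hP, hg]
    exact (cfc_sub _ _ A Real.continuous_sqrt.continuousOn hcont_q.continuousOn).symm
  have hshift : ‖cfc g A - (-(TT N/2)) • (1:𝔄)‖ ≤ TT N / 2 := by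
    have he : cfc g A - (-(TT N/2)) • (1:𝔄) = cfc (fun t => g t + TT N/2) A := by
      rw [cfc_add_const (TT N/2) g A hcont_g hsa, Algebra.algebraMap_eq_smul_one]
      rw [neg_smul, sub_neg_eq_add]
    rw [he]
    apply norm_cfc_le (by linarith [TT_pos N])
    intro t ht
    obtain ⟨hlow, hup⟩ := key_bounds N (hspec0 t ht) (hspec1 t ht)
    rw [Real.norm_eq_abs, abs_le, hg]
    constructor
    · simp only
      linarith
    · simp only
      linarith
  have hd : ‖C*B - B*C‖ = ‖A*B - B*A‖ := by
    have he : C*B - B*C = -(A*B - B*A) := by rw [hCdef]; noncomm_ring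
    rw [he, norm_neg]
  have hnormC : ‖C‖ ≤ 1 := by
    have h := (CStarAlgebra.norm_le_one_iff_of_nonneg C (sub_nonneg.mpr hA1)).mpr
    apply h
    rw [hCdef]
    calc 1 - A ≤ 1 - 0 := sub_le_sub_left hA0 1
      _ = 1 := sub_zero 1
  have hQB : ‖Q*B - B*Q‖ ≤ ((N:ℝ) * cb N) * ‖A*B - B*A‖ := by
    have hexp : Q*B - B*Q = ∑ k ∈ range N, al k • (C^(k+1)*B - B*C^(k+1)) := by
      rw [hQdef, sum_mul, mul_sum, ← sum_sub_distrib]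
      refine sum_congr rfl fun k _ => ?_
      rw [smul_mul_assoc, mul_smul_comm, smul_sub]
    rw [hexp]
    have hbound : ∀ k ∈ range N,
        ‖al k • (C^(k+1)*B - B*C^(k+1))‖ ≤ ((k:ℝ)+1) * al k * ‖A*B - B*A‖ := by
      intro k _
      rw [norm_smul, Real.norm_eq_abs, abs_of_pos (al_pos k)]
      have hcp := comm_pow C B hnormC (k+1)
      rw [hd] at hcp
      calc al k * ‖C^(k+1)*B - B*C^(k+1)‖
          ≤ al k * (((k:ℕ)+1:ℕ) * ‖A*B - B*A‖) :=
            mul_le_mul_of_nonneg_left hcp (al_pos k).le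
        _ = ((k:ℝ)+1) * al k * ‖A*B - B*A‖ := by push_cast; ring
    calc ‖∑ k ∈ range N, al k • (C^(k+1)*B - B*C^(k+1))‖
        ≤ ∑ k ∈ range N, ‖al k • (C^(k+1)*B - B*C^(k+1))‖ := norm_sum_le _ _
      _ ≤ ∑ k ∈ range N, ((k:ℝ)+1) * al k * ‖A*B - B*A‖ := sum_le_sum hbound
      _ = (∑ k ∈ range N, ((k:ℝ)+1) * al k) * ‖A*B - B*A‖ := by rw [sum_mul]
      _ = ((N:ℝ) * cb N) * ‖A*B - B*A‖ := by rw [S_eq]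
  have hsplitEq : CFC.sqrt A * B - B * CFC.sqrt A
      = ((1-Q)*B - B*(1-Q)) + ((CFC.sqrt A - (1-Q))*B - B*(CFC.sqrt A - (1-Q))) := by
    noncomm_ring
  have h1Q : ‖(1-Q)*B - B*(1-Q)‖ = ‖Q*B - B*Q‖ := by
    have he : (1-Q)*B - B*(1-Q) = -(Q*B - B*Q) := by noncomm_ring
    rw [he, norm_neg]
  have hRB : ‖(CFC.sqrt A - (1-Q))*B - B*(CFC.sqrt A - (1-Q))‖ ≤ TT N := by
    have hcs := comm_shift (CFC.sqrt A - (1-Q)) B (-(TT N/2)) hB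
    rw [hR] at hcs
    calc ‖(CFC.sqrt A - (1-Q))*B - B*(CFC.sqrt A - (1-Q))‖
        = ‖cfc g A * B - B * cfc g A‖ := by rw [hR]
      _ ≤ 2 * ‖cfc g A - (-(TT N/2)) • (1:𝔄)‖ := hcs
      _ ≤ 2 * (TT N/2) := by linarith [hshift]
      _ = TT N := by ring
  calc ‖CFC.sqrt A * B - B * CFC.sqrt A‖
      = ‖((1-Q)*B - B*(1-Q)) + ((CFC.sqrt A - (1-Q))*B - B*(CFC.sqrt A - (1-Q)))‖ := by
        rw [← hsplitEq]
    _ ≤ ‖(1-Q)*B - B*(1-Q)‖ + ‖(CFC.sqrt A - (1-Q))*B - B*(CFC.sqrt A - (1-Q))‖ :=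
        norm_add_le _ _
    _ ≤ ((N:ℝ) * cb N) * ‖A*B - B*A‖ + TT N := by
        rw [h1Q]
        exact add_le_add hQB hRB
    _ = (N:ℝ) * cb N * ‖A*B - B*A‖ + TT N := by ring

end Operator

end PedersenAux

/-- Pedersen's commutator inequality: if `0 ≤ A ≤ 1` and `‖B‖ ≤ 1` in a C*-algebra, then
`‖[A^{1/2}, B]‖ ≤ (5/4)·‖[A, B]‖^{1/2}`. -/
theorem pedersen_commutator_inequality {𝔄 : Type*} [CStarAlgebra 𝔄] [PartialOrder 𝔄]
    [StarOrderedRing 𝔄]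
    (A B : 𝔄) (hA0 : 0 ≤ A) (hA1 : A ≤ 1) (hB : ‖B‖ ≤ 1) :
    ‖CFC.sqrt A * B - B * CFC.sqrt A‖ ≤ 5 / 4 * Real.sqrt ‖A * B - B * A‖ := by
  classical
  set d : ℝ := ‖A * B - B * A‖ with hd
  have hd0 : (0:ℝ) ≤ d := norm_nonneg _
  rcases le_or_gt (16/25 : ℝ) d with h1 | h1
  · -- large d : trivial bound via N = 0
    have hm := PedersenAux.master A B hA0 hA1 hB 0
    have hT0 : PedersenAux.TT 0 = 1 := by
      rw [PedersenAux.TT, PedersenAux.al_zero]; norm_num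
    have hr := PedersenAux.region1 d h1
    rw [hT0] at hm
    have hz : ((0:ℕ):ℝ) * PedersenAux.cb 0 * d = 0 := by norm_num
    rw [hz] at hm
    linarith
  · rcases le_or_gt (1/3 : ℝ) d with h2 | h2
    · -- middle region : N = 2
      have hm := PedersenAux.master A B hA0 hA1 hB 2
      have hr := PedersenAux.region2 d h2 h1.le
      have hc : ((2:ℕ):ℝ) = 2 := by norm_num
      rw [hc] at hm
      linarith
    · rcases hd0.eq_or_lt with heq | hpos
      · -- d = 0
        have hXle : ∀ n : ℕ, ‖CFC.sqrt A * B - B * CFC.sqrt A‖ ≤ PedersenAux.TT n := by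
          intro n
          have hm := PedersenAux.master A B hA0 hA1 hB n
          rw [← hd, ← heq] at hm
          simpa using hm
        have hX0 : ‖CFC.sqrt A * B - B * CFC.sqrt A‖ ≤ 0 := by
          by_contra hc
          push_neg at hc
          set X : ℝ := ‖CFC.sqrt A * B - B * CFC.sqrt A‖ with hX
          obtain ⟨n, hn⟩ := exists_nat_gt ((3/(2*X))^2)
          have hsn : 3/(2*X) < Real.sqrt ((n:ℝ)+1) := by
            calc 3/(2*X) = Real.sqrt ((3/(2*X))^2) := (Real.sqrt_sq (by positivity)).symm
              _ < Real.sqrt ((n:ℝ)+1) := by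
                  apply Real.sqrt_lt_sqrt (by positivity)
                  linarith
          have hdecay := PedersenAux.TT_decay n
          have hTpos := PedersenAux.TT_pos n
          have hs0 : (0:ℝ) < Real.sqrt ((n:ℝ)+1) := lt_trans (by positivity) hsn
          have h3 : (3:ℝ) < 2*X*Real.sqrt ((n:ℝ)+1) := by
            rw [div_lt_iff₀ (by positivity : (0:ℝ) < 2*X)] at hsn
            nlinarith [hsn]
          have hlt : PedersenAux.TT n < X := by
            nlinarith [h3, hdecay, hs0, hTpos]
          linarith [hXle n]
        have hrhs : (0:ℝ) ≤ 5/4 * Real.sqrt d := by positivity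
        linarith
      · -- 0 < d ≤ 1/3 : N = ⌊1/d⌋
        set n : ℕ := ⌊1/d⌋₊ with hn
        have hfl : (n:ℝ) ≤ 1/d := Nat.floor_le (by positivity)
        have hlt : 1/d < (n:ℝ)+1 := by
          have := Nat.lt_floor_add_one (1/d)
          push_cast at this
          linarith
        have hdN : (n:ℝ)*d ≤ 1 := by
          rw [div_eq_mul_inv, one_mul] at hfl
          calc (n:ℝ)*d ≤ d⁻¹*d := mul_le_mul_of_nonneg_right hfl hd0
            _ = 1 := inv_mul_cancel₀ hpos.ne'
        have hdN1 : 1 ≤ ((n:ℝ)+1)*d := by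
          have h := (div_lt_iff₀ hpos).mp hlt
          linarith
        have hm := PedersenAux.master A B hA0 hA1 hB n
        have hr := PedersenAux.region3 d n hpos h2.le hdN hdN1
        linarith
end

section
/- Let U and V be non-commuting unitary operators on a Hilbert space H. Then there exist sequences of unitaries U_n, V_n on H ⊕ H with ‖[U_n, V_n]‖ < ‖[U, V]‖ for all n, such that the compressions P_H U_n|_H and P_H V_n|_H converge in operator norm to U and V respectively. -/
open Filter Topology

noncomputable section

namespace DilPert

set_option linter.unusedSectionVars false

variable {H : Type*} [NormedAddCommGroup H] [InnerProductSpace ℂ H] [CompleteSpace H]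

def i1 : H →L[ℂ] WithLp 2 (H × H) :=
  ((WithLp.prodContinuousLinearEquiv 2 ℂ H H).symm : H × H →L[ℂ] WithLp 2 (H × H)).comp
    (ContinuousLinearMap.inl ℂ H H)
def i2 : H →L[ℂ] WithLp 2 (H × H) :=
  ((WithLp.prodContinuousLinearEquiv 2 ℂ H H).symm : H × H →L[ℂ] WithLp 2 (H × H)).comp
    (ContinuousLinearMap.inr ℂ H H)
def p1 : WithLp 2 (H × H) →L[ℂ] H :=
  (ContinuousLinearMap.fst ℂ H H).comp
    ((WithLp.prodContinuousLinearEquiv 2 ℂ H H : WithLp 2 (H × H) →L[ℂ] H × H))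
def p2 : WithLp 2 (H × H) →L[ℂ] H :=
  (ContinuousLinearMap.snd ℂ H H).comp
    ((WithLp.prodContinuousLinearEquiv 2 ℂ H H : WithLp 2 (H × H) →L[ℂ] H × H))

@[simp] lemma p1_apply (x : WithLp 2 (H × H)) : p1 x = x.fst := rfl
@[simp] lemma p2_apply (x : WithLp 2 (H × H)) : p2 x = x.snd := rfl
@[simp] lemma i1_fst (x : H) : (i1 x).fst = x := rfl
@[simp] lemma i1_snd (x : H) : (i1 x).snd = 0 := rfl
@[simp] lemma i2_fst (x : H) : (i2 x).fst = 0 := rfl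
@[simp] lemma i2_snd (x : H) : (i2 x).snd = x := rfl

/-- Block operator `[[a, b], [c, d]]` on the Hilbert space `ℓ²`-direct sum `H ⊕ H`. -/
def blk (a b c d : H →L[ℂ] H) : WithLp 2 (H × H) →L[ℂ] WithLp 2 (H × H) :=
  i1.comp (a.comp p1) + i1.comp (b.comp p2) + i2.comp (c.comp p1) + i2.comp (d.comp p2)

@[simp] lemma blk_apply_fst (a b c d : H →L[ℂ] H) (x : WithLp 2 (H × H)) :
    (blk a b c d x).fst = a x.fst + b x.snd := by
  simp [blk, WithLp.add_fst]

@[simp] lemma blk_apply_snd (a b c d : H →L[ℂ] H) (x : WithLp 2 (H × H)) :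
    (blk a b c d x).snd = c x.fst + d x.snd := by
  simp [blk, WithLp.add_snd]

lemma ext2 {f g : WithLp 2 (H × H) →L[ℂ] WithLp 2 (H × H)}
    (h1 : ∀ x, (f x).fst = (g x).fst) (h2 : ∀ x, (f x).snd = (g x).snd) : f = g := by
  ext x
  exact WithLp.ofLp_injective 2 (Prod.ext (h1 x) (h2 x))

lemma blk_mul (a b c d a' b' c' d' : H →L[ℂ] H) :
    blk a b c d * blk a' b' c' d' =
      blk (a*a'+b*c') (a*b'+b*d') (c*a'+d*c') (c*b'+d*d') := by
  refine ext2 (fun x => ?_) (fun x => ?_) <;>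
    simp [ContinuousLinearMap.mul_apply, map_add] <;> abel

lemma blk_sub (a b c d a' b' c' d' : H →L[ℂ] H) :
    blk a b c d - blk a' b' c' d' = blk (a-a') (b-b') (c-c') (d-d') := by
  refine ext2 (fun x => ?_) (fun x => ?_) <;>
    simp [WithLp.sub_fst, WithLp.sub_snd] <;> abel

lemma blk_one : blk (1 : H →L[ℂ] H) 0 0 1 = 1 := by
  refine ext2 (fun x => ?_) (fun x => ?_) <;> simp

lemma adjoint_i1 : ContinuousLinearMap.adjoint (i1 : H →L[ℂ] WithLp 2 (H × H)) = p1 := by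
  symm
  rw [ContinuousLinearMap.eq_adjoint_iff]
  intro x y
  simp [WithLp.prod_inner_apply]

lemma adjoint_i2 : ContinuousLinearMap.adjoint (i2 : H →L[ℂ] WithLp 2 (H × H)) = p2 := by
  symm
  rw [ContinuousLinearMap.eq_adjoint_iff]
  intro x y
  simp [WithLp.prod_inner_apply]

lemma adjoint_p1 : ContinuousLinearMap.adjoint (p1 : WithLp 2 (H × H) →L[ℂ] H) = i1 := by
  symm
  rw [ContinuousLinearMap.eq_adjoint_iff]
  intro x y
  simp [WithLp.prod_inner_apply]

lemma adjoint_p2 : ContinuousLinearMap.adjoint (p2 : WithLp 2 (H × H) →L[ℂ] H) = i2 := by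
  symm
  rw [ContinuousLinearMap.eq_adjoint_iff]
  intro x y
  simp [WithLp.prod_inner_apply]

lemma star_blk (a b c d : H →L[ℂ] H) :
    star (blk a b c d) = blk (star a) (star c) (star b) (star d) := by
  simp only [ContinuousLinearMap.star_eq_adjoint, blk, map_add,
    ContinuousLinearMap.adjoint_comp, adjoint_i1, adjoint_i2, adjoint_p1, adjoint_p2,
    ContinuousLinearMap.comp_assoc]
  abel

lemma compress_blk (a b c d : H →L[ℂ] H) :
    p1.comp ((blk a b c d).comp i1) = a := by
  ext x
  simp

lemma norm_blk_diag_le (a d : H →L[ℂ] H) :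
    ‖blk a 0 0 d‖ ≤ max ‖a‖ ‖d‖ := by
  have hm : (0:ℝ) ≤ max ‖a‖ ‖d‖ := le_trans (norm_nonneg a) (le_max_left _ _)
  refine (blk a 0 0 d).opNorm_le_bound hm fun x => ?_
  have key : ‖blk a 0 0 d x‖^2 ≤ (max ‖a‖ ‖d‖ * ‖x‖)^2 := by
    have h0 : ‖blk a 0 0 d x‖^2 = ‖a x.fst‖^2 + ‖d x.snd‖^2 := by
      rw [WithLp.prod_norm_sq_eq_of_L2, blk_apply_fst, blk_apply_snd]
      simp
    have hx : ‖x‖^2 = ‖x.fst‖^2 + ‖x.snd‖^2 := WithLp.prod_norm_sq_eq_of_L2 x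
    have ha : ‖a x.fst‖ ≤ max ‖a‖ ‖d‖ * ‖x.fst‖ :=
      le_trans (a.le_opNorm _) (by gcongr; exact le_max_left _ _)
    have hd : ‖d x.snd‖ ≤ max ‖a‖ ‖d‖ * ‖x.snd‖ :=
      le_trans (d.le_opNorm _) (by gcongr; exact le_max_right _ _)
    have ha2 : ‖a x.fst‖^2 ≤ (max ‖a‖ ‖d‖)^2 * ‖x.fst‖^2 := by
      rw [← mul_pow]; exact pow_le_pow_left₀ (norm_nonneg _) ha 2
    have hd2 : ‖d x.snd‖^2 ≤ (max ‖a‖ ‖d‖)^2 * ‖x.snd‖^2 := by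
      rw [← mul_pow]; exact pow_le_pow_left₀ (norm_nonneg _) hd 2
    have hexp : (max ‖a‖ ‖d‖ * ‖x‖)^2
        = (max ‖a‖ ‖d‖)^2 * ‖x.fst‖^2 + (max ‖a‖ ‖d‖)^2 * ‖x.snd‖^2 := by
      rw [mul_pow, hx]; ring
    rw [h0, hexp]
    linarith
  exact le_of_pow_le_pow_left₀ two_ne_zero (by positivity) key

lemma entry_diag (t s : ℝ) (h : t^2 + s^2 = 1) (A B : H →L[ℂ] H) (hAB : A*B = 1) :
    ((t:ℂ)•A)*((t:ℂ)•B) + ((s:ℂ)•(1:H →L[ℂ] H))*((s:ℂ)•1) = 1 := by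
  rw [smul_mul_smul_comm, smul_mul_smul_comm, hAB, mul_one, ← add_smul]
  have h2 : ((t:ℂ)*t + (s:ℂ)*s) = 1 := by
    have h3 : ((t:ℂ)^2 + (s:ℂ)^2) = 1 := by exact_mod_cast h
    linear_combination h3
  rw [h2, one_smul]

lemma entry_off1 (t s : ℝ) (A : H →L[ℂ] H) :
    ((t:ℂ)•A)*((s:ℂ)•(1:H →L[ℂ] H)) + ((s:ℂ)•(1:H →L[ℂ] H))*(-((t:ℂ)•A)) = 0 := by
  rw [mul_neg, smul_mul_smul_comm, smul_mul_smul_comm, mul_one, one_mul, mul_comm (t:ℂ) s]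
  exact add_neg_cancel _

lemma entry_off2 (t s : ℝ) (A : H →L[ℂ] H) :
    ((s:ℂ)•(1:H →L[ℂ] H))*((t:ℂ)•A) + (-((t:ℂ)•A))*((s:ℂ)•(1:H →L[ℂ] H)) = 0 := by
  rw [neg_mul, smul_mul_smul_comm, smul_mul_smul_comm, mul_one, one_mul, mul_comm (t:ℂ) s]
  exact add_neg_cancel _

lemma entry_diag2 (t s : ℝ) (h : t^2 + s^2 = 1) (A B : H →L[ℂ] H) (hAB : A*B = 1) :
    ((s:ℂ)•(1:H →L[ℂ] H))*((s:ℂ)•1) + (-((t:ℂ)•A))*(-((t:ℂ)•B)) = 1 := by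
  rw [neg_mul_neg, add_comm]
  exact entry_diag t s h A B hAB

lemma norm_le_one_of_unitary (U : H →L[ℂ] H) (hU : star U * U = 1) : ‖U‖ ≤ 1 := by
  have h1 : ‖star U * U‖ ≤ 1 := by
    rw [hU]
    exact (ContinuousLinearMap.norm_id_le : ‖(ContinuousLinearMap.id ℂ H)‖ ≤ 1)
  nlinarith [CStarRing.norm_star_mul_self (x := U), norm_nonneg U]

end DilPert

open DilPert in
/-- Let `U` and `V` be non-commuting unitary operators on a Hilbert space `H`.  Then
there are sequences of unitaries `U_n, V_n` on `H ⊕ H` with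
`‖[U_n, V_n]‖ < ‖[U, V]‖` whose compressions `P_H U_n |_H` and `P_H V_n |_H` converge
in operator norm to `U` and `V` respectively. -/
theorem dilated_perturbation_smaller_commutator {H : Type*} [NormedAddCommGroup H]
    [InnerProductSpace ℂ H] [CompleteSpace H]
    (U V : H →L[ℂ] H) (hU : U ∈ unitary (H →L[ℂ] H)) (hV : V ∈ unitary (H →L[ℂ] H))
    (hUV : U * V ≠ V * U) :
    let H2 := WithLp 2 (H × H)
    let incl : H →L[ℂ] H2 :=
      ((WithLp.prodContinuousLinearEquiv 2 ℂ H H).symm : H × H →L[ℂ] H2).comp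
        (ContinuousLinearMap.inl ℂ H H)
    let proj : H2 →L[ℂ] H :=
      (ContinuousLinearMap.fst ℂ H H).comp
        ((WithLp.prodContinuousLinearEquiv 2 ℂ H H : H2 →L[ℂ] H × H))
    ∃ Un Vn : ℕ → (H2 →L[ℂ] H2),
      (∀ n, Un n ∈ unitary (H2 →L[ℂ] H2) ∧ Vn n ∈ unitary (H2 →L[ℂ] H2) ∧
        ‖Un n * Vn n - Vn n * Un n‖ < ‖U * V - V * U‖) ∧
      Tendsto (fun n => ‖proj.comp ((Un n).comp incl) - U‖) atTop (𝓝 0) ∧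
      Tendsto (fun n => ‖proj.comp ((Vn n).comp incl) - V‖) atTop (𝓝 0) := by
  intro H2 incl proj
  obtain ⟨hU1, hU2⟩ := Unitary.mem_iff.mp hU
  obtain ⟨hV1, hV2⟩ := Unitary.mem_iff.mp hV
  -- the commutator and its positivity
  set C : H →L[ℂ] H := U * V - V * U with hC
  have hCne : C ≠ 0 := sub_ne_zero.mpr hUV
  have hCpos : 0 < ‖C‖ := norm_pos_iff.mpr hCne
  -- the parameters
  set t : ℕ → ℝ := fun n => 1 - 1/(n+1) with ht
  have ht0 : ∀ n, 0 ≤ t n := by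
    intro n
    have : 1/((n:ℝ)+1) ≤ 1 := by
      rw [div_le_one (by positivity)]
      linarith [Nat.cast_nonneg (α := ℝ) n]
    simp only [ht]
    linarith
  have ht1 : ∀ n, t n < 1 := by
    intro n
    have : 0 < 1/((n:ℝ)+1) := by positivity
    simp only [ht]
    linarith
  set s : ℕ → ℝ := fun n => Real.sqrt (1 - (t n)^2) with hs
  have hts : ∀ n, (t n)^2 + (s n)^2 = 1 := by
    intro n
    have h1 : (t n)^2 ≤ 1 := by
      have := ht0 n; have := ht1 n
      nlinarith
    have : (s n)^2 = 1 - (t n)^2 := Real.sq_sqrt (by linarith)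
    rw [this]; ring
  -- the sequences
  set Un : ℕ → (H2 →L[ℂ] H2) := fun n =>
    blk ((t n : ℂ) • U) ((s n : ℂ) • 1) ((s n : ℂ) • 1) (-((t n : ℂ) • star U)) with hUn
  set Vn : ℕ → (H2 →L[ℂ] H2) := fun n => blk V 0 0 V with hVn
  refine ⟨Un, Vn, fun n => ⟨?_, ?_, ?_⟩, ?_, ?_⟩
  · -- Un is unitary
    rw [Unitary.mem_iff]
    have hstar : star (Un n) =
        blk ((t n : ℂ) • star U) ((s n : ℂ) • 1) ((s n : ℂ) • 1) (-((t n : ℂ) • U)) := by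
      rw [hUn, star_blk]
      simp [star_smul, Complex.conj_ofReal]
    constructor
    · rw [hstar, hUn, blk_mul, entry_diag _ _ (hts n) _ _ hU1,
        entry_off1, entry_off2, entry_diag2 _ _ (hts n) _ _ hU2, blk_one]
    · rw [hstar, hUn, blk_mul, entry_diag _ _ (hts n) _ _ hU2,
        entry_off1, entry_off2, entry_diag2 _ _ (hts n) _ _ hU1, blk_one]
  · -- Vn is unitary
    rw [Unitary.mem_iff]
    have hstar : star (Vn n) = blk (star V) 0 0 (star V) := by
      rw [hVn, star_blk, star_zero]
    constructor
    · rw [hstar, hVn, blk_mul]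
      simp only [zero_mul, mul_zero, add_zero, zero_add, hV1]
      exact blk_one
    · rw [hstar, hVn, blk_mul]
      simp only [zero_mul, mul_zero, add_zero, zero_add, hV2]
      exact blk_one
  · -- commutator estimate
    have hcomm : Un n * Vn n - Vn n * Un n =
        blk ((t n : ℂ) • C) 0 0 ((t n : ℂ) • (V * star U - star U * V)) := by
      rw [hUn, hVn, blk_mul, blk_mul, blk_sub]
      congr 1 <;> [skip; skip; skip; skip]
      · rw [smul_mul_assoc, mul_smul_comm, hC]
        simp [smul_sub]
      · simp [smul_mul_assoc, mul_smul_comm]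
      · simp [smul_mul_assoc, mul_smul_comm]
      · simp only [zero_mul, mul_zero, add_zero, zero_add, neg_mul, mul_neg,
          smul_mul_assoc, mul_smul_comm, smul_sub, smul_zero, zero_smul]
        abel
    have hD : ‖V * star U - star U * V‖ ≤ ‖C‖ := by
      have hrw : V * star U - star U * V = star U * C * star U := by
        rw [hC]
        symm
        calc star U * (U * V - V * U) * star U
            = (star U * U) * (V * star U) - (star U * V) * (U * star U) := by
              noncomm_ring
          _ = V * star U - star U * V := by rw [hU1, hU2, one_mul, mul_one]
      have hUs : ‖star (U : H →L[ℂ] H)‖ ≤ 1 := by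
        apply norm_le_one_of_unitary
        rw [star_star]; exact hU2
      calc ‖V * star U - star U * V‖ = ‖star U * C * star U‖ := by rw [hrw]
        _ ≤ ‖star U * C‖ * ‖star U‖ := norm_mul_le _ _
        _ ≤ (‖star (U : H →L[ℂ] H)‖ * ‖C‖) * ‖star U‖ := by
            gcongr; exact norm_mul_le _ _
        _ ≤ (1 * ‖C‖) * 1 := by
            gcongr <;> exact hUs
        _ = ‖C‖ := by ring
    have hnt : ∀ (A : H →L[ℂ] H), ‖(t n : ℂ) • A‖ = t n * ‖A‖ := by
      intro A
      rw [norm_smul, Complex.norm_real, Real.norm_eq_abs, abs_of_nonneg (ht0 n)]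
    calc ‖Un n * Vn n - Vn n * Un n‖
        ≤ max ‖(t n : ℂ) • C‖ ‖(t n : ℂ) • (V * star U - star U * V)‖ := by
          rw [hcomm]; exact norm_blk_diag_le _ _
      _ ≤ t n * ‖C‖ := by
          apply max_le
          · rw [hnt]
          · rw [hnt]
            exact mul_le_mul_of_nonneg_left hD (ht0 n)
      _ < 1 * ‖C‖ := by exact mul_lt_mul_of_pos_right (ht1 n) hCpos
      _ = ‖U * V - V * U‖ := by rw [one_mul, hC]
  · -- convergence of compressions of Un
    have hcomp : ∀ n, proj.comp ((Un n).comp incl) = (t n : ℂ) • U := fun n =>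
      compress_blk ((t n : ℂ) • U) _ _ _
    have heq : (fun n : ℕ => ‖proj.comp ((Un n).comp incl) - U‖)
        = fun n : ℕ => (1/(n+1)) * ‖U‖ := by
      funext n
      rw [hcomp n]
      have : (t n : ℂ) • U - U = ((t n : ℂ) - 1) • U := by rw [sub_smul, one_smul]
      rw [this, norm_smul]
      have h1 : ((t n : ℂ) - 1) = ((t n - 1 : ℝ) : ℂ) := by push_cast; ring
      rw [h1, Complex.norm_real, Real.norm_eq_abs]
      have h2 : t n - 1 = -(1/(n+1)) := by simp only [ht]; ring
      rw [h2, abs_neg, abs_of_pos (by positivity)]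
    rw [heq]
    have := tendsto_one_div_add_atTop_nhds_zero_nat.mul_const ‖U‖
    rw [zero_mul] at this
    exact this
  · -- convergence of compressions of Vn
    have hcomp : ∀ n, proj.comp ((Vn n).comp incl) = V := fun n => compress_blk V _ _ _
    have hfun : (fun n => ‖proj.comp ((Vn n).comp incl) - V‖) = fun _ => (0:ℝ) :=
      funext fun n => by rw [hcomp n, sub_self, norm_zero]
    rw [hfun]
    exact tendsto_const_nhds
end
end

section
/- For any C*-algebra D, (K ⊗ D) ∩ ((∏ M_n) ⊗ D) = (⊕ M_n) ⊗ D, where all tensor products are minimal and ∏M_n ⊆ B(H), ⊕M_n ⊆ K(H) are embedded block-diagonally. -/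
open scoped TensorProduct

noncomputable section

open Filter Topology

lemma aux_sa_idem_norm_le_one {A : Type*} [CStarAlgebra A] {p : A}
    (h1 : IsIdempotentElem p) (h2 : IsSelfAdjoint p) : ‖p‖ ≤ 1 := by
  have h : ‖p‖ * ‖p‖ = ‖p‖ := by
    rw [← CStarRing.norm_star_mul_self, h2.star_eq, h1.eq]
  nlinarith [norm_nonneg p]

lemma aux_finrank_compact {H : Type*} [NormedAddCommGroup H] [InnerProductSpace ℂ H]
    (f : H →L[ℂ] H) (hf : FiniteDimensional ℂ (LinearMap.range ((f : H →ₗ[ℂ] H)))) :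
    IsCompactOperator ⇑f := by
  set M := LinearMap.range ((f : H →ₗ[ℂ] H)) with hM
  haveI : FiniteDimensional ℂ M := hf
  refine ⟨Subtype.val '' Metric.closedBall (0 : M) ‖f‖,
    (isCompact_closedBall _ _).image continuous_subtype_val, ?_⟩
  refine Filter.mem_of_superset (Metric.ball_mem_nhds 0 one_pos) ?_
  intro x hx
  have hmem : f x ∈ M := LinearMap.mem_range_self _ x
  refine ⟨⟨f x, hmem⟩, ?_, rfl⟩
  rw [Metric.mem_closedBall, dist_zero_right]
  show ‖f x‖ ≤ ‖f‖
  calc ‖f x‖ ≤ ‖f‖ * ‖x‖ := f.le_opNorm x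
  _ ≤ ‖f‖ * 1 := by
      have := le_of_lt (mem_ball_zero_iff.1 hx)
      exact mul_le_mul_of_nonneg_left this (norm_nonneg f)
  _ = ‖f‖ := mul_one _

section blocks

variable {H : Type*} [NormedAddCommGroup H] [InnerProductSpace ℂ H] [CompleteSpace H]
    (e : ℕ → H →L[ℂ] H)
    (he_proj : ∀ n, IsIdempotentElem (e n) ∧ IsSelfAdjoint (e n))
    (he_orth : ∀ m n, m ≠ n → e m * e n = 0)
    (he_fin : ∀ n, FiniteDimensional ℂ (LinearMap.range ((e n) : H →ₗ[ℂ] H)))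
    (he_sum : ∀ x : H, HasSum (fun n => e n x) x)

def pproj (k : ℕ) : H →L[ℂ] H := ∑ n ∈ Finset.range k, e n

include he_proj he_orth in
lemma pproj_idem (k : ℕ) : IsIdempotentElem (pproj e k) := by
  show pproj e k * pproj e k = pproj e k
  unfold pproj
  rw [Finset.sum_mul_sum]
  refine Finset.sum_congr rfl fun m hm => ?_
  rw [Finset.sum_eq_single m (fun n _ hne => he_orth m n (Ne.symm hne)) (fun h => absurd hm h)]
  exact (he_proj m).1

include he_proj in
lemma pproj_sa (k : ℕ) : IsSelfAdjoint (pproj e k) := by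
  unfold pproj
  rw [IsSelfAdjoint, star_sum]
  exact Finset.sum_congr rfl fun n _ => (he_proj n).2.star_eq

include he_proj he_orth in
lemma pproj_comm (k n : ℕ) : Commute (pproj e k) (e n) := by
  refine Commute.sum_left _ _ _ fun m _ => ?_
  rcases eq_or_ne m n with rfl | h
  · exact Commute.refl _
  · show e m * e n = e n * e m
    rw [he_orth m n h, he_orth n m h.symm]

include he_fin in
lemma pproj_compact (k : ℕ) : IsCompactOperator ⇑(pproj e k) := by
  induction k with
  | zero =>
      show IsCompactOperator ⇑(0 : H →L[ℂ] H)
      simpa using isCompactOperator_zero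
  | succ k ih =>
      have : pproj e (k + 1) = pproj e k + e k := by
        unfold pproj; rw [Finset.sum_range_succ]
      rw [this]
      have h2 : IsCompactOperator ⇑(e k) := aux_finrank_compact _ (he_fin k)
      have := ih.add h2
      rwa [show ⇑(pproj e k) + ⇑(e k) = ⇑(pproj e k + e k) from rfl] at this

include he_sum in
lemma pproj_strong (x : H) : Tendsto (fun k => pproj e k x) atTop (𝓝 x) := by
  have := (he_sum x).tendsto_sum_nat
  convert this using 2 with k
  simp [pproj]

include he_proj he_orth he_sum in
lemma pproj_approx (T : H →L[ℂ] H) (hT : IsCompactOperator ⇑T) :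
    Tendsto (fun k => ‖pproj e k * T - T‖) atTop (𝓝 0) := by
  have hq : ∀ k, ‖1 - pproj e k‖ ≤ 1 := fun k =>
    aux_sa_idem_norm_le_one (pproj_idem e he_proj he_orth k).one_sub
      ((IsSelfAdjoint.one _).sub (pproj_sa e he_proj k))
  -- compactness of closure of image of closed unit ball
  have hS : IsCompact (closure (⇑T '' Metric.closedBall 0 1)) := by
    exact hT.isCompact_closure_image_closedBall (𝕜₁ := ℂ) 1
  set S := closure (⇑T '' Metric.closedBall 0 1) with hSdef
  rw [Metric.tendsto_atTop]
  intro ε hε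
  -- finite subcover
  have hcover : S ⊆ ⋃ y ∈ S, Metric.ball y (ε / 3) := fun y hy =>
    Set.mem_biUnion hy (Metric.mem_ball_self (by linarith))
  obtain ⟨t, hts, htf, hcov⟩ := hS.elim_finite_subcover_image
    (fun y _ => Metric.isOpen_ball) hcover
  have hev : ∀ᶠ k in atTop, ∀ y ∈ t, ‖y - pproj e k y‖ < ε / 3 := by
    refine htf.eventually_all.2 fun y _ => ?_
    have h1 : Tendsto (fun k => y - pproj e k y) atTop (𝓝 0) := by
      have := (tendsto_const_nhds : Tendsto (fun _ : ℕ => y) atTop (𝓝 y)).sub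
        (pproj_strong e he_sum y)
      simpa using this
    have := (NormedAddCommGroup.tendsto_nhds_zero.1 h1) (ε / 3) (by linarith)
    exact this
  obtain ⟨N, hN⟩ := eventually_atTop.1 hev
  refine ⟨N, fun k hk => ?_⟩
  have hz : ∀ z ∈ S, ‖z - pproj e k z‖ ≤ 2 * ε / 3 := by
    intro z hz
    obtain ⟨y, hyt, hzy⟩ := Set.mem_iUnion₂.1 (hcov hz)
    have hzy' : ‖z - y‖ < ε / 3 := by
      rw [Metric.mem_ball, dist_eq_norm] at hzy; exact hzy
    have h1 : z - pproj e k z = (1 - pproj e k) (z - y) + (y - pproj e k y) := by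
      simp only [ContinuousLinearMap.sub_apply, ContinuousLinearMap.one_apply, map_sub]
      abel
    have h2 : ‖(1 - pproj e k) (z - y)‖ ≤ ‖z - y‖ := by
      calc ‖(1 - pproj e k) (z - y)‖ ≤ ‖(1 : H →L[ℂ] H) - pproj e k‖ * ‖z - y‖ :=
            ContinuousLinearMap.le_opNorm _ _
      _ ≤ 1 * ‖z - y‖ := mul_le_mul_of_nonneg_right (hq k) (norm_nonneg _)
      _ = ‖z - y‖ := one_mul _
    have h3 := hN k hk y hyt
    calc ‖z - pproj e k z‖ ≤ ‖(1 - pproj e k) (z - y)‖ + ‖y - pproj e k y‖ := by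
          rw [h1]; exact norm_add_le _ _
    _ ≤ ‖z - y‖ + ‖y - pproj e k y‖ := by linarith
    _ ≤ 2 * ε / 3 := by linarith
  have hb : ∀ x : H, ‖(pproj e k * T - T) x‖ ≤ (2 * ε / 3) * ‖x‖ := by
    intro x
    rcases eq_or_ne x 0 with rfl | hx0
    · simp
    · set u := ((‖x‖ : ℂ))⁻¹ • x with hu
      have hxn : (0:ℝ) < ‖x‖ := norm_pos_iff.2 hx0
      have hcn : ‖((‖x‖ : ℂ))‖ = ‖x‖ := by
        rw [Complex.norm_real, norm_norm]
      have hcne : ((‖x‖ : ℂ)) ≠ 0 := by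
        simpa using ne_of_gt hxn
      have hun : ‖u‖ = 1 := by
        rw [hu, norm_smul, norm_inv, hcn, inv_mul_cancel₀ (ne_of_gt hxn)]
      have hTu : T u ∈ S := subset_closure ⟨u, by simp [hun], rfl⟩
      have h1 : ‖(pproj e k * T - T) u‖ ≤ 2 * ε / 3 := by
        have : (pproj e k * T - T) u = -(T u - pproj e k (T u)) := by
          simp [ContinuousLinearMap.sub_apply, ContinuousLinearMap.mul_apply]
        rw [this, norm_neg]
        exact hz (T u) hTu
      have hxu : x = ((‖x‖ : ℂ)) • u := by
        rw [hu, smul_smul, mul_inv_cancel₀ hcne, one_smul]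
      calc ‖(pproj e k * T - T) x‖ = ‖x‖ * ‖(pproj e k * T - T) u‖ := by
            conv_lhs => rw [hxu]
            rw [map_smul, norm_smul, hcn]
      _ ≤ ‖x‖ * (2 * ε / 3) := mul_le_mul_of_nonneg_left h1 (le_of_lt hxn)
      _ = (2 * ε / 3) * ‖x‖ := mul_comm _ _
  have hle : ‖pproj e k * T - T‖ ≤ 2 * ε / 3 :=
    ContinuousLinearMap.opNorm_le_bound _ (by linarith) hb
  rw [Real.dist_eq, sub_zero, abs_of_nonneg (norm_nonneg _)]
  linarith

end blocks


/-- `E`, together with the commuting unital *-homomorphisms `φ : A → E` and `ψ : D → E`,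
is the minimal (spatial) tensor product `A ⊗ D`: the images commute, their products span a
dense subspace, the canonical map from the algebraic tensor product is injective, and `E`
carries the smallest C*-norm among all such C*-completions (Takesaki's theorem
characterizes the minimal tensor norm as the least C*-norm on `A ⊙ D`). -/
def IsMinTensor (A D E : Type*) [CStarAlgebra A] [CStarAlgebra D] [CStarAlgebra E]
    (φ : A →⋆ₐ[ℂ] E) (ψ : D →⋆ₐ[ℂ] E) : Prop :=
  (∀ a d, Commute (φ a) (ψ d)) ∧
    closure (Submodule.span ℂ {x : E | ∃ a d, x = φ a * ψ d} : Set E) = Set.univ ∧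
    (∀ (n : ℕ) (a : Fin n → A) (d : Fin n → D),
      ∑ i, φ (a i) * ψ (d i) = 0 → (∑ i, a i ⊗ₜ[ℂ] d i : TensorProduct ℂ A D) = 0) ∧
    ∀ (E' : Type) [CStarAlgebra E'] (φ' : A →⋆ₐ[ℂ] E') (ψ' : D →⋆ₐ[ℂ] E'),
      (∀ a d, Commute (φ' a) (ψ' d)) →
      (∀ (n : ℕ) (a : Fin n → A) (d : Fin n → D),
        ∑ i, φ' (a i) * ψ' (d i) = 0 → (∑ i, a i ⊗ₜ[ℂ] d i : TensorProduct ℂ A D) = 0) →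
      closure (Submodule.span ℂ {x : E' | ∃ a d, x = φ' a * ψ' d} : Set E') = Set.univ →
      ∃ θ : E' →⋆ₐ[ℂ] E, θ.comp φ' = φ ∧ θ.comp ψ' = ψ

/-- For any C*-algebra `D`, inside the minimal tensor product `B(H) ⊗ D` one has
`(K ⊗ D) ∩ ((∏ Mₙ) ⊗ D) = (⊕ Mₙ) ⊗ D`.  The block structure of `H` is given by a family
`e` of pairwise-orthogonal finite-rank projections summing to `1`; `∏ Mₙ` consists of the
block-diagonal operators (those commuting with every `e n`), `K` of the compact operators,
and `⊕ Mₙ` of the block-diagonal compact operators. -/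
theorem compacts_tensor_inter_product_tensor {H D E : Type*} [NormedAddCommGroup H]
    [InnerProductSpace ℂ H] [CompleteSpace H] [CStarAlgebra D] [CStarAlgebra E]
    (e : ℕ → H →L[ℂ] H)
    (he_proj : ∀ n, IsIdempotentElem (e n) ∧ IsSelfAdjoint (e n))
    (he_orth : ∀ m n, m ≠ n → e m * e n = 0)
    (he_fin : ∀ n, FiniteDimensional ℂ (LinearMap.range ((e n) : H →ₗ[ℂ] H)))
    (he_sum : ∀ x : H, HasSum (fun n => e n x) x)
    (φ : (H →L[ℂ] H) →⋆ₐ[ℂ] E) (ψ : D →⋆ₐ[ℂ] E)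
    (hmin : IsMinTensor (H →L[ℂ] H) D E φ ψ) :
    closure (Submodule.span ℂ
        {x : E | ∃ (T : H →L[ℂ] H) (d : D), IsCompactOperator ⇑T ∧ x = φ T * ψ d} : Set E)
      ∩ closure (Submodule.span ℂ
        {x : E | ∃ (T : H →L[ℂ] H) (d : D), (∀ n, Commute T (e n)) ∧ x = φ T * ψ d} :
          Set E) =
      closure (Submodule.span ℂ
        {x : E | ∃ (T : H →L[ℂ] H) (d : D),
          (IsCompactOperator ⇑T ∧ ∀ n, Commute T (e n)) ∧ x = φ T * ψ d} : Set E) := by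
  set SK := {x : E | ∃ (T : H →L[ℂ] H) (d : D), IsCompactOperator ⇑T ∧ x = φ T * ψ d}
    with hSKdef
  set SP := {x : E | ∃ (T : H →L[ℂ] H) (d : D), (∀ n, Commute T (e n)) ∧ x = φ T * ψ d}
    with hSPdef
  set SKP := {x : E | ∃ (T : H →L[ℂ] H) (d : D),
      (IsCompactOperator ⇑T ∧ ∀ n, Commute T (e n)) ∧ x = φ T * ψ d} with hSKPdef
  apply Set.Subset.antisymm
  · -- the hard inclusion
    intro x hx
    obtain ⟨hx1, hx2⟩ := hx
    have hφp : ∀ k, ‖φ (pproj e k)‖ ≤ 1 := fun k =>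
      le_trans (NonUnitalStarAlgHom.norm_apply_le φ _)
        (aux_sa_idem_norm_le_one (pproj_idem e he_proj he_orth k) (pproj_sa e he_proj k))
    -- convergence on generators of SK
    have hconv : ∀ (T : H →L[ℂ] H) (d : D), IsCompactOperator ⇑T →
        Tendsto (fun k => φ (pproj e k) * (φ T * ψ d)) atTop (𝓝 (φ T * ψ d)) := by
      intro T d hT
      rw [tendsto_iff_norm_sub_tendsto_zero]
      have hb : ∀ k, ‖φ (pproj e k) * (φ T * ψ d) - φ T * ψ d‖ ≤
          ‖pproj e k * T - T‖ * ‖ψ d‖ := by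
        intro k
        rw [← mul_assoc, ← map_mul]
        calc ‖φ (pproj e k * T) * ψ d - φ T * ψ d‖
            = ‖(φ (pproj e k * T) - φ T) * ψ d‖ := by rw [sub_mul]
        _ ≤ ‖φ (pproj e k * T) - φ T‖ * ‖ψ d‖ := norm_mul_le _ _
        _ = ‖φ (pproj e k * T - T)‖ * ‖ψ d‖ := by rw [map_sub]
        _ ≤ ‖pproj e k * T - T‖ * ‖ψ d‖ :=
            mul_le_mul_of_nonneg_right (NonUnitalStarAlgHom.norm_apply_le φ _) (norm_nonneg _)
      refine squeeze_zero (fun k => norm_nonneg _) hb ?_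
      simpa using (pproj_approx e he_proj he_orth he_sum T hT).mul_const ‖ψ d‖
    -- convergence on the span of SK
    have hspan : ∀ y ∈ (Submodule.span ℂ SK : Set E),
        Tendsto (fun k => φ (pproj e k) * y) atTop (𝓝 y) := by
      intro y hy
      have hy' : y ∈ Submodule.span ℂ SK := hy
      clear hy
      induction hy' using Submodule.span_induction with
      | mem z hz =>
          obtain ⟨T, d, hT, rfl⟩ := hz
          exact hconv T d hT
      | zero => simpa using (tendsto_const_nhds : Tendsto (fun _ : ℕ => (0:E)) atTop _)
      | add u v hu hv hiu hiv =>
          have := hiu.add hiv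
          simpa [mul_add] using this
      | smul a u hu hiu =>
          have := hiu.const_smul a
          simpa [mul_smul_comm] using this
    -- extend convergence to the closure
    have hTend : Tendsto (fun k => φ (pproj e k) * x) atTop (𝓝 x) := by
      rw [Metric.tendsto_atTop]
      intro ε hε
      obtain ⟨y, hy, hxy⟩ := Metric.mem_closure_iff.1 hx1 (ε/3) (by linarith)
      obtain ⟨N, hN⟩ := Metric.tendsto_atTop.1 (hspan y hy) (ε/3) (by linarith)
      refine ⟨N, fun k hk => ?_⟩
      have e1 : φ (pproj e k) * x - x =
          φ (pproj e k) * (x - y) + (φ (pproj e k) * y - y) + (y - x) := by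
        noncomm_ring
      have e2 : ‖φ (pproj e k) * (x - y)‖ ≤ ‖x - y‖ := by
        calc ‖φ (pproj e k) * (x - y)‖ ≤ ‖φ (pproj e k)‖ * ‖x - y‖ := norm_mul_le _ _
        _ ≤ 1 * ‖x - y‖ := mul_le_mul_of_nonneg_right (hφp k) (norm_nonneg _)
        _ = ‖x - y‖ := one_mul _
      have hxy' : ‖x - y‖ < ε/3 := by rwa [dist_eq_norm] at hxy
      have hNy := hN k hk
      rw [dist_eq_norm] at hNy
      rw [dist_eq_norm]
      have e3 : ‖y - x‖ = ‖x - y‖ := norm_sub_rev _ _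
      calc ‖φ (pproj e k) * x - x‖
          ≤ ‖φ (pproj e k) * (x - y)‖ + ‖φ (pproj e k) * y - y‖ + ‖y - x‖ := by
            rw [e1]; exact norm_add₃_le
      _ < ε := by rw [e3]; linarith
    -- each φ (pproj e k) * x lies in the closure of the span of SKP
    have hmem : ∀ k, φ (pproj e k) * x ∈ closure (Submodule.span ℂ SKP : Set E) := by
      intro k
      have hmapsto : Set.MapsTo (fun z => φ (pproj e k) * z)
          (Submodule.span ℂ SP : Set E) (Submodule.span ℂ SKP : Set E) := by
        intro y hy
        have hy' : y ∈ Submodule.span ℂ SP := hy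
        clear hy
        show φ (pproj e k) * y ∈ Submodule.span ℂ SKP
        induction hy' using Submodule.span_induction with
        | mem z hz =>
            obtain ⟨T, d, hTc, rfl⟩ := hz
            refine Submodule.subset_span ?_
            refine ⟨pproj e k * T, d, ⟨?_, ?_⟩, by rw [← mul_assoc, ← map_mul]⟩
            · have h1 : IsCompactOperator ⇑(pproj e k) := pproj_compact e he_fin k
              have h2 := h1.comp_clm T
              have h3 : ⇑(pproj e k * T) = ⇑(pproj e k) ∘ ⇑T := rfl
              rw [h3]; exact h2
            · intro n
              exact Commute.mul_left (pproj_comm e he_proj he_orth k n) (hTc n)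
        | zero => rw [mul_zero]; exact Submodule.zero_mem _
        | add u v hu hv hiu hiv =>
            rw [mul_add]; exact Submodule.add_mem _ hiu hiv
        | smul a u hu hiu =>
            rw [mul_smul_comm]; exact Submodule.smul_mem _ _ hiu
      exact map_mem_closure (continuous_const.mul continuous_id) hx2 hmapsto
    exact isClosed_closure.mem_of_tendsto hTend (Filter.Eventually.of_forall hmem)
  · -- the easy inclusion
    have h1 : SKP ⊆ SK := by
      rintro x ⟨T, d, ⟨hc, _⟩, hx⟩; exact ⟨T, d, hc, hx⟩
    have h2 : SKP ⊆ SP := by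
      rintro x ⟨T, d, ⟨_, hp⟩, hx⟩; exact ⟨T, d, hp, hx⟩
    intro x hx
    exact ⟨closure_mono (SetLike.coe_subset_coe.2 (Submodule.span_mono h1)) hx,
      closure_mono (SetLike.coe_subset_coe.2 (Submodule.span_mono h2)) hx⟩
end
end
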